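/- arXiv:1803.03372 — 7 statements merged into one kernel-verified Lean document; each statement's English description precedes it below -/
import Mathlib

section
/- Let d ≥ 1 and let x_1, …, x_d be binary variables taking values in {0,1} (regarded as integers). Then the negative monomial satisfies −∏_{j=1}^d x_j = min_{w ∈ {0,1}} w·((d−1) − ∑_{j=1}^d x_j). -/
/-- Freedman reduction: for binary x₁,…,x_d (d ≥ 1),
    −∏ x_j = min_{w ∈ {0,1}} w·((d−1) − ∑ x_j). -/
theorem freedman_reduction (d : ℕ) (hd : 1 ≤ d) (x : Fin d → ℤ)
    (hx : ∀ j, x j = 0 ∨ x j = 1) :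
    -(∏ j, x j) =
      Finset.univ.inf' Finset.univ_nonempty
        (fun w : Fin 2 => ((w : ℕ) : ℤ) * (((d : ℤ) - 1) - ∑ j, x j)) := by
  by_cases h : ∀ j, x j = 1
  · have hp : (∏ j, x j) = 1 := by
      rw [Finset.prod_congr rfl (fun j _ => h j), Finset.prod_const_one]
    have hs : (∑ j, x j) = d := by
      rw [Finset.sum_congr rfl (fun j _ => h j)]
      simp
    rw [hp, hs]
    apply le_antisymm
    · apply Finset.le_inf'
      intro w _
      fin_cases w <;> simp
    · exact Finset.inf'_le_of_le _ (Finset.mem_univ (1 : Fin 2)) (by norm_num)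
  · push_neg at h
    obtain ⟨i, hi⟩ := h
    have hi0 : x i = 0 := (hx i).resolve_right hi
    have hp : (∏ j, x j) = 0 := Finset.prod_eq_zero (Finset.mem_univ i) hi0
    have hs : (∑ j, x j) ≤ (d : ℤ) - 1 := by
      have h1 : (∑ j, x j) = ∑ j ∈ Finset.univ.erase i, x j := by
        rw [← Finset.add_sum_erase _ _ (Finset.mem_univ i), hi0, zero_add]
      have h2 : (∑ j ∈ Finset.univ.erase i, x j) ≤ (Finset.univ.erase i).card • (1 : ℤ) := by
        apply Finset.sum_le_card_nsmul
        intro j _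
        rcases hx j with h | h <;> simp [h]
      have h3 : (Finset.univ.erase i).card = d - 1 := by
        rw [Finset.card_erase_of_mem (Finset.mem_univ i)]
        simp
      rw [h1]
      calc (∑ j ∈ Finset.univ.erase i, x j) ≤ (Finset.univ.erase i).card • (1 : ℤ) := h2
        _ = ((d : ℤ) - 1) := by
            rw [h3, nsmul_eq_mul, mul_one, Nat.cast_sub hd]; simp
    rw [hp]
    apply le_antisymm
    · apply Finset.le_inf'
      intro w _
      fin_cases w
      · simp
      · simp only [Fin.val_one, Nat.cast_one, one_mul, neg_zero]
        linarith
    · exact Finset.inf'_le_of_le _ (Finset.mem_univ (0 : Fin 2)) (by norm_num)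
end

section
/- Let d ≥ 2 be even, let x_1, …, x_d be binary variables taking values in {0,1} (regarded as integers), and let k = ⌊(d−1)/2⌋. Define S_1 = ∑_{j=1}^d x_j, S_2 = ∑_{1 ≤ i < j ≤ d} x_i x_j, and for w = (w_1,…,w_k) ∈ {0,1}^k define W_1 = ∑_{j=1}^k w_j and W_2 = ∑_{j=1}^k (4j−1) w_j. Then ∏_{j=1}^d x_j = S_2 + min_{w ∈ {0,1}^k} (W_2 − 2·W_1·S_1). -/
/-- The per-coordinate minimum sum. -/
def ishF (k : ℕ) (s : ℤ) : ℤ := ∑ j ∈ Finset.range k, min 0 (4 * (j : ℤ) + 3 - 2 * s)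

lemma ishF_tail (k : ℕ) (s : ℤ) (h : 2 * k + 1 ≤ s) :
    ishF k s = 2 * (k : ℤ) ^ 2 + k - 2 * s * k := by
  induction k with
  | zero => simp [ishF]
  | succ n ih =>
      have hn : 2 * (n : ℤ) + 1 ≤ s := by push_cast at h ⊢; linarith
      rw [ishF, Finset.sum_range_succ, ← ishF, ih hn,
        min_eq_right (by push_cast at h ⊢; linarith)]
      push_cast
      ring

lemma ishF_main (k : ℕ) (s : ℤ) (h0 : 0 ≤ s) (h1 : s ≤ 2 * k + 2) :
    s * (s - 1) + 2 * ishF k s = if s = 2 * k + 2 then 2 else 0 := by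
  induction k with
  | zero =>
      have : ishF 0 s = 0 := by simp [ishF]
      rw [this]
      push_cast at h1 ⊢
      interval_cases s <;> norm_num
  | succ n ih =>
      rw [ishF, Finset.sum_range_succ, ← ishF]
      push_cast at h1 ⊢
      rcases le_or_gt s (2 * (n : ℤ) + 2) with hle | hgt
      · have := ih (by linarith)
        push_cast at this
        rcases lt_or_eq_of_le hle with hlt | heq
        · rw [min_eq_left (by linarith)]
          rw [if_neg (by linarith)] at this
          rw [if_neg (by linarith)]
          linarith
        · rw [min_eq_right (by linarith)]
          rw [if_pos heq] at this
          rw [if_neg (by linarith)]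
          linarith
      · have htail : ishF n s = 2 * (n : ℤ) ^ 2 + n - 2 * s * n :=
          ishF_tail n s (by push_cast; linarith)
        rw [min_eq_right (by linarith), htail]
        rcases eq_or_lt_of_le (show 2 * (n : ℤ) + 3 ≤ s by linarith) with heq | hlt
        · rw [if_neg (by linarith)]; nlinarith
        · rw [if_pos (by linarith)]; nlinarith

/-- Ishikawa reduction, even-degree case: for binary x₁,…,x_d (d ≥ 2 even) and
    k = ⌊(d−1)/2⌋, ∏ x_j = S₂ + min_{w ∈ {0,1}^k} (W₂ − 2·W₁·S₁). -/
theorem ishikawa_even (d k : ℕ) (hd : 2 ≤ d) (hdeven : Even d) (hk : k = (d - 1) / 2)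
    (x : Fin d → ℤ) (hx : ∀ j, x j = 0 ∨ x j = 1) :
    (∏ j, x j) =
      (∑ p ∈ Finset.univ.filter (fun p : Fin d × Fin d => p.1 < p.2), x p.1 * x p.2) +
      Finset.univ.inf' Finset.univ_nonempty
        (fun w : Fin k → Fin 2 =>
          (∑ j : Fin k, (4 * ((j.1 : ℤ) + 1) - 1) * ((w j).1 : ℤ)) -
            2 * (∑ j : Fin k, ((w j).1 : ℤ)) * (∑ j, x j)) := by
  obtain ⟨m, hm⟩ := hdeven
  have hd2 : d = 2 * k + 2 := by omega
  set s : ℤ := ∑ j, x j with hs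
  set A : ℤ := ∑ p ∈ Finset.univ.filter (fun p : Fin d × Fin d => p.1 < p.2), x p.1 * x p.2
    with hA
  have hx0 : ∀ j, 0 ≤ x j := fun j => by rcases hx j with h | h <;> simp [h]
  have hx1 : ∀ j, x j ≤ 1 := fun j => by rcases hx j with h | h <;> simp [h]
  have hs0 : 0 ≤ s := Finset.sum_nonneg fun j _ => hx0 j
  have hsd : s ≤ d := by
    calc s ≤ ∑ _j : Fin d, (1 : ℤ) := Finset.sum_le_sum fun j _ => hx1 j
    _ = d := by simp
  -- Step 1: squares
  have hsq : ∀ j, x j * x j = x j := fun j => by rcases hx j with h | h <;> simp [h]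
  -- Step 2: 2*A = s*s - s
  have h2A : 2 * A = s * s - s := by
    have h1 : s * s = ∑ p : Fin d × Fin d, x p.1 * x p.2 := by
      rw [← Finset.univ_product_univ, Finset.sum_product]
      exact Finset.sum_mul_sum _ _ _ _
    have hsplit : (∑ p : Fin d × Fin d, x p.1 * x p.2) =
        A + ((∑ p ∈ Finset.univ.filter (fun p : Fin d × Fin d => p.1 = p.2), x p.1 * x p.2)
          + (∑ p ∈ Finset.univ.filter (fun p : Fin d × Fin d => p.2 < p.1), x p.1 * x p.2)) := by
      rw [hA, ← Finset.sum_filter_add_sum_filter_not Finset.univ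
        (fun p : Fin d × Fin d => p.1 < p.2)]
      congr 1
      rw [← Finset.sum_filter_add_sum_filter_not
        (Finset.univ.filter (fun p : Fin d × Fin d => ¬ p.1 < p.2))
        (fun p : Fin d × Fin d => p.1 = p.2)]
      congr 1
      · apply Finset.sum_congr _ (fun _ _ => rfl)
        rw [Finset.filter_filter]
        apply Finset.filter_congr
        intro p _
        simp only [Fin.ext_iff, Fin.lt_def, not_lt]
        omega
      · apply Finset.sum_congr _ (fun _ _ => rfl)
        rw [Finset.filter_filter]
        apply Finset.filter_congr
        intro p _
        simp only [eq_iff_iff, Fin.ext_iff, Fin.lt_def]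
        omega
    have hdiag : (∑ p ∈ Finset.univ.filter (fun p : Fin d × Fin d => p.1 = p.2),
        x p.1 * x p.2) = s := by
      rw [Finset.sum_filter, ← Finset.univ_product_univ, Finset.sum_product]
      apply Finset.sum_congr rfl
      intro i _
      rw [Finset.sum_ite_eq Finset.univ i (fun j => x i * x j)]
      simp [hsq i]
    have hlt : (∑ p ∈ Finset.univ.filter (fun p : Fin d × Fin d => p.2 < p.1),
        x p.1 * x p.2) = A := by
      rw [hA]
      apply Finset.sum_nbij' (i := fun p => Prod.swap p) (j := fun p => Prod.swap p) <;>
        simp [mul_comm]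
    rw [hdiag, hlt] at hsplit
    rw [h1, hsplit]; ring
  -- Step 3: product value
  have hP : (∏ j, x j) = if s = (d : ℤ) then 1 else 0 := by
    by_cases hall : ∀ j, x j = 1
    · rw [Finset.prod_eq_one fun j _ => hall j, if_pos]
      rw [hs]
      calc (∑ j, x j) = ∑ _j : Fin d, (1 : ℤ) := Finset.sum_congr rfl fun j _ => hall j
      _ = d := by simp
    · push_neg at hall
      obtain ⟨j, hj⟩ := hall
      have hj0 : x j = 0 := (hx j).resolve_right hj
      rw [Finset.prod_eq_zero (Finset.mem_univ j) hj0, if_neg]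
      intro hcon
      have : s = (∑ i ∈ Finset.univ.erase j, x i) + x j :=
        (Finset.sum_erase_add _ _ (Finset.mem_univ j)).symm
      have hb : (∑ i ∈ Finset.univ.erase j, x i) ≤ (d - 1 : ℕ) := by
        calc (∑ i ∈ Finset.univ.erase j, x i) ≤ ∑ _i ∈ Finset.univ.erase j, (1 : ℤ) :=
          Finset.sum_le_sum fun i _ => hx1 i
        _ = ((Finset.univ.erase j).card : ℤ) := by simp
        _ = (d - 1 : ℕ) := by rw [Finset.card_erase_of_mem (Finset.mem_univ j)]; simp
      have : s ≤ (d : ℤ) - 1 := by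
        rw [this, hj0, add_zero]
        calc (∑ i ∈ Finset.univ.erase j, x i) ≤ ((d - 1 : ℕ) : ℤ) := hb
        _ = (d : ℤ) - 1 := by push_cast [Nat.cast_sub (by omega : 1 ≤ d)]; ring
      omega
  clear_value s A
  -- Step 4: the inf'
  have hinf : Finset.univ.inf' Finset.univ_nonempty
        (fun w : Fin k → Fin 2 =>
          (∑ j : Fin k, (4 * ((j.1 : ℤ) + 1) - 1) * ((w j).1 : ℤ)) -
            2 * (∑ j : Fin k, ((w j).1 : ℤ)) * s) = ishF k s := by
    have hf : ∀ w : Fin k → Fin 2,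
        ((∑ j : Fin k, (4 * ((j.1 : ℤ) + 1) - 1) * ((w j).1 : ℤ)) -
            2 * (∑ j : Fin k, ((w j).1 : ℤ)) * s) =
        ∑ j : Fin k, (4 * ((j.1 : ℤ) + 1) - 1 - 2 * s) * ((w j).1 : ℤ) := by
      intro w
      simp only [sub_mul, Finset.sum_sub_distrib]
      congr 1
      rw [Finset.mul_sum, Finset.sum_mul]
      apply Finset.sum_congr rfl
      intro j _
      ring
    have hFmin : ishF k s = ∑ j : Fin k, min 0 (4 * ((j.1 : ℤ) + 1) - 1 - 2 * s) := by
      rw [ishF, Finset.sum_range fun j => min 0 (4 * (j : ℤ) + 3 - 2 * s)]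
      apply Finset.sum_congr rfl
      intro j _
      congr 1
      ring
    apply le_antisymm
    · set w₀ : Fin k → Fin 2 := fun j =>
        if 4 * ((j.1 : ℤ) + 1) - 1 - 2 * s < 0 then 1 else 0 with hw₀
      have := Finset.inf'_le (b := w₀)
        (fun w : Fin k → Fin 2 =>
          (∑ j : Fin k, (4 * ((j.1 : ℤ) + 1) - 1) * ((w j).1 : ℤ)) -
            2 * (∑ j : Fin k, ((w j).1 : ℤ)) * s) (Finset.mem_univ w₀)
      refine le_trans this (le_of_eq ?_)
      rw [hf w₀, hFmin]
      apply Finset.sum_congr rfl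
      intro j _
      rw [hw₀]
      by_cases hc : 4 * ((j.1 : ℤ) + 1) - 1 - 2 * s < 0
      · simp only [if_pos hc]
        rw [min_eq_right (le_of_lt hc)]
        norm_num
      · simp only [if_neg hc]
        rw [min_eq_left (by linarith)]
        norm_num
    · apply Finset.le_inf'
      intro w _
      rw [hf w, hFmin]
      apply Finset.sum_le_sum
      intro j _
      have : ((w j).1 : ℤ) = 0 ∨ ((w j).1 : ℤ) = 1 := by
        have := (w j).2; omega
      rcases this with h | h
      · rw [h, mul_zero]; exact min_le_left _ _
      · rw [h, mul_one]; exact min_le_right _ _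
  rw [hinf, hP]
  have hcast : (d : ℤ) = 2 * (k : ℤ) + 2 := by
    exact_mod_cast congrArg (Nat.cast : ℕ → ℤ) hd2
  have hmain := ishF_main k s hs0 (by push_cast; rw [← hcast]; exact hsd)
  have hiff : (s = (d : ℤ)) ↔ (s = 2 * (k : ℤ) + 2) := by rw [hcast]
  split_ifs with h
  · rw [if_pos (hiff.mp h)] at hmain; linarith
  · rw [if_neg (fun hc => h (hiff.mpr hc))] at hmain; linarith
end

section
/- Let d ≥ 3 be odd, let x_1, …, x_d be binary variables taking values in {0,1} (regarded as integers), and let k = ⌊(d−1)/2⌋. Define S_1 = ∑_{j=1}^d x_j, S_2 = ∑_{1 ≤ i < j ≤ d} x_i x_j, and for w = (w_1,…,w_k) ∈ {0,1}^k define W_1 = ∑_{j=1}^k w_j and W_2 = ∑_{j=1}^k (4j−1) w_j. Then ∏_{j=1}^d x_j = S_2 + min_{w ∈ {0,1}^k} (W_2 − 2·W_1·S_1 + w_k·(S_1 − d + 1)). -/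
/-!
Write `s = S₁`. As `x` is binary, `∏ x = [s = d]` and `2 S₂ = s (s - 1)`. The objective is
linear in `w`, namely `∑ c_j w_j` with `c_j = 4j - 1 - 2s` for `j < k` and `c_k = 2k - 1 - s`,
so its minimum over `{0,1}^k` is `∑ min(0, c_j)`. Dropping `c_1` and lowering `s` by `2` turns
the coefficients for `k` into those for `k - 1`, and induction on `k` gives
`2 ∑ min(0, c_j) = -s (s - 1) + 2 [s = 2k + 1]`.
-/

open Finset

theorem two_mul_sum_filter_lt_mul_eq_sq_sum_sub {ι R : Type*} [Fintype ι] [LinearOrder ι]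
    [CommRing R] (f : ι → R) :
    2 * ∑ p ∈ univ.filter (fun p : ι × ι => p.1 < p.2), f p.1 * f p.2 =
      (∑ i, f i) ^ 2 - ∑ i, f i ^ 2 := by
  have hlt : ∑ p ∈ univ.filter (fun p : ι × ι => p.1 < p.2), f p.1 * f p.2 =
      ∑ i, ∑ j, if i < j then f i * f j else 0 := by
    rw [sum_filter, Fintype.sum_prod_type]
  have hgt : ∑ i, ∑ j, (if j < i then f i * f j else 0) =
      ∑ i, ∑ j, if i < j then f i * f j else 0 := by
    rw [sum_comm]
    simp_rw [mul_comm]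
  have hdiag : ∑ i, ∑ j, (if i = j then f i * f j else 0) = ∑ i, f i ^ 2 := by
    simp [sq]
  have hsplit : (∑ i, f i) ^ 2 = ∑ i, ∑ j, ((if i < j then f i * f j else 0) +
      (if j < i then f i * f j else 0) + (if i = j then f i * f j else 0)) := by
    rw [sq, sum_mul_sum]
    refine sum_congr rfl fun i _ => sum_congr rfl fun j _ => ?_
    rcases lt_trichotomy i j with h | rfl | h
    · simp [h, h.not_gt, h.ne]
    · simp
    · simp [h, h.not_gt, h.ne']
  simp only [sum_add_distrib, hgt, hdiag] at hsplit
  rw [hlt, hsplit]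
  ring

theorem prod_eq_ite_sum_eq_card {ι R : Type*} [Fintype ι] [CommRing R] [LinearOrder R]
    [IsStrictOrderedRing R] (x : ι → R) (hx : ∀ j, x j = 0 ∨ x j = 1) :
    ∏ j, x j = if ∑ j, x j = Fintype.card ι then 1 else 0 := by
  have hall : ∑ j, x j = Fintype.card ι ↔ ∀ j, x j = 1 := by
    have hdefect : (Fintype.card ι : R) - ∑ j, x j = ∑ j, (1 - x j) := by
      simp [sum_sub_distrib]
    rw [eq_comm, ← sub_eq_zero, hdefect,
      sum_eq_zero_iff_of_nonneg fun j _ => by rcases hx j with h | h <;> simp [h]]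
    simp only [mem_univ, forall_const, sub_eq_zero]
    exact forall_congr' fun j => eq_comm
  split_ifs with h
  · exact prod_eq_one fun j _ => hall.1 h j
  · obtain ⟨j, hj⟩ := not_forall.1 (mt hall.2 h)
    exact prod_eq_zero (mem_univ j) ((hx j).resolve_right hj)

theorem inf'_sum_mul_fin_two_eq_sum_min {ι R : Type*} [Fintype ι] [DecidableEq ι]
    [CommRing R] [LinearOrder R] [IsStrictOrderedRing R] (c : ι → R) :
    univ.inf' univ_nonempty (fun w : ι → Fin 2 => ∑ i, c i * ((w i : ℕ) : R)) =
      ∑ i, min 0 (c i) := by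
  refine le_antisymm ?_ (le_inf' _ _ fun w _ => sum_le_sum fun i _ => ?_)
  · refine (inf'_le _ (mem_univ fun i => if c i < 0 then 1 else 0)).trans_eq ?_
    refine sum_congr rfl fun i _ => ?_
    dsimp only
    split_ifs with h
    · simp [h.le]
    · simp [not_lt.1 h]
  · have : ∀ b : Fin 2, min 0 (c i) ≤ c i * ((b : ℕ) : R) := by
      simp [Fin.forall_fin_two]
    exact this (w i)

/-- `ishikawaCoeff m s j` is `c_{j+1}` for `k = m + 1` and `S₁ = s`. -/
def ishikawaCoeff (m : ℕ) (s : ℤ) (j : ℕ) : ℤ :=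
  if j = m then 2 * m + 1 - s else 4 * (j + 1) - 1 - 2 * s

theorem ishikawaCoeff_succ_zero (m : ℕ) (s : ℤ) : ishikawaCoeff (m + 1) s 0 = 3 - 2 * s := by
  simp [ishikawaCoeff]

theorem ishikawaCoeff_succ_succ (m j : ℕ) (s : ℤ) :
    ishikawaCoeff (m + 1) s (j + 1) = ishikawaCoeff m (s - 2) j := by
  simp only [ishikawaCoeff, add_left_inj]
  split_ifs <;> push_cast <;> ring

theorem ishikawaCoeff_nonneg {m : ℕ} {s : ℤ} (hs0 : 0 ≤ s) (hs1 : s ≤ 1) (j : ℕ) :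
    0 ≤ ishikawaCoeff m s j := by
  unfold ishikawaCoeff
  split_ifs <;> omega

theorem two_mul_sum_min_ishikawaCoeff (m : ℕ) (s : ℤ) (hs0 : 0 ≤ s) (hs : s ≤ 2 * m + 3) :
    2 * ∑ j : Fin (m + 1), min 0 (ishikawaCoeff m s j) =
      -(s * (s - 1)) + if s = 2 * m + 3 then 2 else 0 := by
  induction m generalizing s with
  | zero =>
    interval_cases s <;> simp [ishikawaCoeff]
  | succ m ih =>
    rcases le_or_gt s 1 with hs1 | hs1
    · have hzero : ∀ j : Fin (m + 2), min 0 (ishikawaCoeff (m + 1) s j) = 0 :=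
        fun j => min_eq_left (ishikawaCoeff_nonneg hs0 hs1 j)
      interval_cases s <;> simp [hzero] <;> omega
    · rw [Fin.sum_univ_succ]
      simp only [Fin.val_zero, Fin.val_succ, ishikawaCoeff_succ_zero, ishikawaCoeff_succ_succ]
      have hprev := ih (s - 2) (by omega) (by push_cast at hs ⊢; omega)
      rw [mul_add, hprev, min_eq_right (by omega)]
      push_cast
      split_ifs <;> first | omega | ring

theorem ishikawa_objective_eq_sum_coeff_mul (m : ℕ) (s : ℤ) (w : Fin (m + 1) → Fin 2) :
    (∑ j : Fin (m + 1), (4 * ((j.1 : ℤ) + 1) - 1) * ((w j).1 : ℤ)) -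
        2 * (∑ j : Fin (m + 1), ((w j).1 : ℤ)) * s +
        ((w ⟨m, m.lt_add_one⟩).1 : ℤ) * (s - ((2 * m + 3 : ℕ) : ℤ) + 1) =
      ∑ j : Fin (m + 1), ishikawaCoeff m s j * ((w j : ℕ) : ℤ) := by
  rw [show (⟨m, m.lt_add_one⟩ : Fin (m + 1)) = Fin.last m from rfl]
  have hne : ∀ j : Fin m, (j : ℕ) ≠ m := fun j => j.is_lt.ne
  simp only [Fin.sum_univ_castSucc, Fin.val_castSucc, Fin.val_last, ishikawaCoeff, hne,
    if_false, if_true]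
  push_cast
  simp only [sub_mul, sum_sub_distrib, ← mul_sum]
  ring

/-- Ishikawa reduction, odd-degree case: for binary x₁,…,x_d (d ≥ 3 odd) and
    k = ⌊(d−1)/2⌋, ∏ x_j = S₂ + min_{w ∈ {0,1}^k} (W₂ − 2·W₁·S₁ + w_k·(S₁ − d + 1)). -/
theorem ishikawa_odd (d k : ℕ) (hd : 3 ≤ d) (hdodd : Odd d) (hk : k = (d - 1) / 2)
    (x : Fin d → ℤ) (hx : ∀ j, x j = 0 ∨ x j = 1) :
    (∏ j, x j) =
      (∑ p ∈ Finset.univ.filter (fun p : Fin d × Fin d => p.1 < p.2), x p.1 * x p.2) +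
      Finset.univ.inf' Finset.univ_nonempty
        (fun w : Fin k → Fin 2 =>
          (∑ j : Fin k, (4 * ((j.1 : ℤ) + 1) - 1) * ((w j).1 : ℤ)) -
            2 * (∑ j : Fin k, ((w j).1 : ℤ)) * (∑ j, x j) +
            ((w ⟨k - 1, by omega⟩).1 : ℤ) * ((∑ j, x j) - (d : ℤ) + 1)) := by
  obtain ⟨m, rfl⟩ : ∃ m, d = 2 * m + 3 := by
    obtain ⟨r, rfl⟩ := hdodd
    exact ⟨r - 1, by omega⟩
  obtain rfl : k = m + 1 := by omega
  have hpairs := two_mul_sum_filter_lt_mul_eq_sq_sum_sub x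
  have hsq : ∑ j, x j ^ 2 = ∑ j, x j :=
    sum_congr rfl fun j _ => by rcases hx j with h | h <;> simp [h]
  set s := ∑ j, x j
  have hs0 : 0 ≤ s := sum_nonneg fun j _ => by rcases hx j with h | h <;> simp [h]
  have hs : s ≤ 2 * m + 3 := by
    simpa using sum_le_card_nsmul univ x 1 fun j _ => by rcases hx j with h | h <;> simp [h]
  simp only [Nat.add_sub_cancel]
  rw [inf'_congr _ rfl fun w _ => ishikawa_objective_eq_sum_coeff_mul m s w,
    inf'_sum_mul_fin_two_eq_sum_min, prod_eq_ite_sum_eq_card x hx]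
  have hmin := two_mul_sum_min_ishikawaCoeff m s hs0 hs
  rw [Fintype.card_fin]
  push_cast
  split_ifs at hmin ⊢ <;> linarith
end

section
/- Let α < 0 be a real number and let x_1, x_2, x_3 be binary variables taking values in {0,1} (regarded as real numbers). Then α·x_1·x_2·x_3 = min_{w ∈ {0,1}} |α|·w·(2 − x_1 − x_2 − x_3); in particular, for every w ∈ {0,1}, α·x_1·x_2·x_3 ≤ |α|·w·(2 − x_1 − x_2 − x_3). -/
/-! For binary `x₁, x₂, x₃` the product `x₁x₂x₃` equals `max 0 (x₁ + x₂ + x₃ - 2)`. Multiplying by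
`α ≤ 0` turns the `max` into `min 0 (|α|(2 - x₁ - x₂ - x₃))`, which is the minimum over `w ∈ {0,1}`
of `|α| w (2 - x₁ - x₂ - x₃)`. -/

theorem Finset.inf'_univ_fin_two {α : Type*} [SemilatticeInf α] (f : Fin 2 → α) :
    Finset.univ.inf' Finset.univ_nonempty f = f 0 ⊓ f 1 := by
  simp [Fin.univ_succ]

theorem binary_mul_mul_eq_max_sub_two {x y z : ℝ} (hx : x = 0 ∨ x = 1) (hy : y = 0 ∨ y = 1)
    (hz : z = 0 ∨ z = 1) : x * y * z = max 0 (x + y + z - 2) := by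
  rcases hx with rfl | rfl <;> rcases hy with rfl | rfl <;> rcases hz with rfl | rfl <;> norm_num

theorem mul_binary_mul_mul_eq_min {a x y z : ℝ} (ha : a ≤ 0) (hx : x = 0 ∨ x = 1)
    (hy : y = 0 ∨ y = 1) (hz : z = 0 ∨ z = 1) :
    a * x * y * z = min 0 (|a| * (2 - x - y - z)) := by
  rw [mul_assoc, mul_assoc, ← mul_assoc x, binary_mul_mul_eq_max_sub_two hx hy hz, ← smul_eq_mul,
    smul_max_of_nonpos ha, smul_eq_mul, smul_eq_mul, abs_of_nonpos ha]
  ring_nf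

/-- Freedman reduction of a cubic term with negative coefficient:
    α·x₁x₂x₃ = min_{w ∈ {0,1}} |α|·w·(2 − x₁ − x₂ − x₃),
    and in particular ≤ holds for every w ∈ {0,1}. -/
theorem cubic_reduction_neg (α : ℝ) (hα : α < 0) (x1 x2 x3 : ℝ)
    (h1 : x1 = 0 ∨ x1 = 1) (h2 : x2 = 0 ∨ x2 = 1) (h3 : x3 = 0 ∨ x3 = 1) :
    (α * x1 * x2 * x3 =
      Finset.univ.inf' Finset.univ_nonempty
        (fun w : Fin 2 => |α| * ((w : ℕ) : ℝ) * (2 - x1 - x2 - x3))) ∧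
    ∀ w : ℝ, (w = 0 ∨ w = 1) →
      α * x1 * x2 * x3 ≤ |α| * w * (2 - x1 - x2 - x3) := by
  have hmin := mul_binary_mul_mul_eq_min hα.le h1 h2 h3
  refine ⟨by simpa [Finset.inf'_univ_fin_two] using hmin, ?_⟩
  rintro w (rfl | rfl) <;> simp [hmin]
end

section
/- Let n ≥ 1, let g : {0,1}^n → ℝ be any function, and let S be a nonempty subset of {1,…,n}. Then min over x ∈ {0,1}^n of (g(x) − ∏_{j∈S} x_j) equals min over (x, w) ∈ {0,1}^n × {0,1} of (g(x) + w·((|S| − 1) − ∑_{j∈S} x_j)), where binary values are regarded as real numbers. -/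
lemma freedman_key (n : ℕ) (S : Finset (Fin n)) (hS : S.Nonempty) (x : Fin n → Fin 2) :
    (∀ w : Fin 2, -(∏ j ∈ S, ((x j : ℕ) : ℝ)) ≤
      ((w : ℕ) : ℝ) * (((S.card : ℝ) - 1) - ∑ j ∈ S, ((x j : ℕ) : ℝ))) ∧
    (∃ w : Fin 2, ((w : ℕ) : ℝ) * (((S.card : ℝ) - 1) - ∑ j ∈ S, ((x j : ℕ) : ℝ)) ≤
      -(∏ j ∈ S, ((x j : ℕ) : ℝ))) := by
  by_cases hall : ∀ j ∈ S, x j = 1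
  · have hprod : (∏ j ∈ S, ((x j : ℕ) : ℝ)) = 1 := by
      apply Finset.prod_eq_one
      intro j hj; rw [hall j hj]; norm_num
    have hsum : (∑ j ∈ S, ((x j : ℕ) : ℝ)) = S.card := by
      rw [Finset.sum_congr rfl (fun j hj => by rw [hall j hj])]
      simp
    rw [hprod, hsum]
    constructor
    · intro w
      have : ((w : ℕ) : ℝ) ≤ 1 := by
        have h := w.isLt
        have : (w : ℕ) ≤ 1 := by omega
        exact_mod_cast this
      nlinarith
    · exact ⟨1, by norm_num⟩
  · push_neg at hall
    obtain ⟨j0, hj0, hxj0⟩ := hall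
    have hx0 : ((x j0 : ℕ) : ℝ) = 0 := by
      have h2 := (x j0).isLt
      have h1 : (x j0 : ℕ) ≠ 1 := fun h => hxj0 (Fin.ext h)
      have : (x j0 : ℕ) = 0 := by omega
      simp [this]
    have hprod : (∏ j ∈ S, ((x j : ℕ) : ℝ)) = 0 :=
      Finset.prod_eq_zero hj0 hx0
    have hsum : (∑ j ∈ S, ((x j : ℕ) : ℝ)) ≤ (S.card : ℝ) - 1 := by
      rw [← Finset.sum_erase_add S _ hj0, hx0, add_zero]
      calc (∑ j ∈ S.erase j0, ((x j : ℕ) : ℝ)) ≤ ∑ j ∈ S.erase j0, (1 : ℝ) := by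
            apply Finset.sum_le_sum
            intro j hj
            have := (x j).isLt
            exact_mod_cast Nat.lt_succ_iff.mp this
        _ = ((S.erase j0).card : ℝ) := by simp
        _ = (S.card : ℝ) - 1 := by
            rw [Finset.card_erase_of_mem hj0]
            have : 1 ≤ S.card := Finset.card_pos.mpr hS
            push_cast [Nat.cast_sub this]
            ring
    rw [hprod]
    constructor
    · intro w
      have hw : (0:ℝ) ≤ ((w : ℕ) : ℝ) := by positivity
      nlinarith
    · exact ⟨0, by norm_num⟩

/-- Applying the Freedman reduction to a negative monomial ∏_{j∈S} x_j occurring in a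
    pseudo-Boolean function preserves the minimum value. -/
theorem freedman_preserves_min (n : ℕ) (hn : 1 ≤ n) (g : (Fin n → Fin 2) → ℝ)
    (S : Finset (Fin n)) (hS : S.Nonempty) :
    Finset.univ.inf' Finset.univ_nonempty
      (fun x : Fin n → Fin 2 => g x - ∏ j ∈ S, ((x j : ℕ) : ℝ)) =
    Finset.univ.inf' Finset.univ_nonempty
      (fun q : (Fin n → Fin 2) × Fin 2 =>
        g q.1 + ((q.2 : ℕ) : ℝ) * (((S.card : ℝ) - 1) - ∑ j ∈ S, ((q.1 j : ℕ) : ℝ))) := by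
  apply le_antisymm
  · apply Finset.le_inf'
    intro q _
    refine le_trans (Finset.inf'_le _ (Finset.mem_univ q.1)) ?_
    have h := (freedman_key n S hS q.1).1 q.2
    linarith
  · apply Finset.le_inf'
    intro x _
    obtain ⟨w, hw⟩ := (freedman_key n S hS x).2
    refine le_trans (Finset.inf'_le _ (Finset.mem_univ (x, w))) ?_
    simpa using by linarith
end

section
/- Let n ≥ 1 and let f : {0,1}^n → ℝ be any function. Then there exist m ∈ ℕ, a constant c ∈ ℝ, linear coefficients u : {1,…,n+m} → ℝ, and quadratic coefficients e : {1,…,n+m} × {1,…,n+m} → ℝ such that for every x ∈ {0,1}^n, f(x) = min over w ∈ {0,1}^m of [c + ∑_{j=1}^{n+m} u_j y_j + ∑_{1 ≤ i < j ≤ n+m} e_{ij} y_i y_j], where y = (x, w) ∈ {0,1}^{n+m}. In particular, min_{x ∈ {0,1}^n} f(x) = min_{y ∈ {0,1}^{n+m}} of the quadratic expression. -/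
/-!
Use one auxiliary bit `w_v` for every point `v` of the cube and put
`Q(x, w) = A + ∑_v w_v (f v - A + 2A·d(x, v))` with `A ≥ max |f|` and `d` the Hamming distance.
For fixed `v`, `d(x, v)` is affine in `x`, so `Q` is quadratic. Minimising over `w` sets
`w_v = 1` exactly where the coefficient is negative, and this happens only at `v = x`,
where the coefficient is `f x - A`; hence the minimum is `f x`.
-/

open Finset

namespace Qubo

variable {R : Type*} [CommSemiring R] {n m : ℕ}

def value {N : ℕ} (c : R) (u : Fin N → R) (e : Fin N → Fin N → R) (y : Fin N → R) : R :=
  c + ∑ j, u j * y j +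
    ∑ p ∈ univ.filter (fun p : Fin N × Fin N => p.1 < p.2), e p.1 p.2 * y p.1 * y p.2

def crossCoeff (b : Fin n → Fin m → R) (j k : Fin (n + m)) : R :=
  Fin.addCases (fun i => Fin.addCases (fun _ => 0) (b i) k) (fun _ => 0) j

@[simp]
lemma crossCoeff_castAdd_castAdd (b : Fin n → Fin m → R) (i i' : Fin n) :
    crossCoeff b (Fin.castAdd m i) (Fin.castAdd m i') = 0 := by
  simp [crossCoeff]

@[simp]
lemma crossCoeff_castAdd_natAdd (b : Fin n → Fin m → R) (i : Fin n) (z : Fin m) :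
    crossCoeff b (Fin.castAdd m i) (Fin.natAdd n z) = b i z := by
  simp [crossCoeff]

@[simp]
lemma crossCoeff_natAdd (b : Fin n → Fin m → R) (z : Fin m) (k : Fin (n + m)) :
    crossCoeff b (Fin.natAdd n z) k = 0 := by
  simp [crossCoeff]

lemma sum_lt_crossCoeff (b : Fin n → Fin m → R) (y : Fin (n + m) → R) :
    ∑ p ∈ univ.filter (fun p : Fin (n + m) × Fin (n + m) => p.1 < p.2),
        crossCoeff b p.1 p.2 * y p.1 * y p.2 =
      ∑ i, ∑ z, b i z * y (Fin.castAdd m i) * y (Fin.natAdd n z) := by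
  rw [sum_filter_of_ne, Fintype.sum_prod_type]
  · simp [Fin.sum_univ_add]
  · rintro ⟨j, k⟩ - hne
    induction j using Fin.addCases with
    | right z => simp at hne
    | left i =>
      induction k using Fin.addCases with
      | left i' => simp at hne
      | right z => simp only [Fin.lt_def, Fin.val_castAdd, Fin.val_natAdd]; omega

lemma value_append_zero_crossCoeff (c : R) (a : Fin m → R) (b : Fin n → Fin m → R)
    (y : Fin (n + m) → R) :
    value c (Fin.append 0 a) (crossCoeff b) y =
      c + ∑ z, (a z + ∑ i, b i z * y (Fin.castAdd m i)) * y (Fin.natAdd n z) := by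
  rw [value, sum_lt_crossCoeff, Fin.sum_univ_add, sum_comm]
  simp only [Fin.append_left, Fin.append_right, Pi.zero_apply, zero_mul, sum_const_zero,
    zero_add, add_mul, sum_mul, sum_add_distrib, add_assoc]

lemma min_le_mul_bit (a : ℝ) (t : Fin 2) : min a 0 ≤ a * ((t : ℕ) : ℝ) := by
  fin_cases t <;> simp

lemma inf'_add_sum_mul_bits {ι : Type*} [Fintype ι] [DecidableEq ι] (c : ℝ) (a : ι → ℝ) :
    univ.inf' univ_nonempty (fun w : ι → Fin 2 => c + ∑ z, a z * ((w z : ℕ) : ℝ)) =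
      c + ∑ z, min (a z) 0 := by
  refine le_antisymm (inf'_le_of_le _ (b := fun z => if a z < 0 then 1 else 0) (mem_univ _) ?_)
    (le_inf' _ _ fun w _ => (add_le_add_iff_left c).2 (sum_le_sum fun z _ => min_le_mul_bit _ _))
  refine (add_le_add_iff_left c).2 (sum_le_sum fun z _ => ?_)
  dsimp only
  split_ifs with h
  · simp [h.le]
  · simp [not_lt.1 h]

lemma hammingDist_eq_sum_bits {ι : Type*} [Fintype ι] (x v : ι → Fin 2) :
    (hammingDist x v : ℝ) =
      ∑ i, ((v i : ℕ) : ℝ) + ∑ i, (1 - 2 * ((v i : ℕ) : ℝ)) * ((x i : ℕ) : ℝ) := by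
  rw [hammingDist, natCast_card_filter, ← sum_add_distrib]
  refine sum_congr rfl fun i _ => ?_
  generalize x i = s, v i = t
  fin_cases s <;> fin_cases t <;> norm_num

lemma inf'_univ_eq_inf'_inf'_append {α β : Type*} [Fintype α] [DecidableEq α] [Nonempty α]
    [SemilatticeInf β] (Q : (Fin (n + m) → α) → β) :
    univ.inf' univ_nonempty Q =
      univ.inf' univ_nonempty
        fun x : Fin n → α =>
          univ.inf' univ_nonempty fun w : Fin m → α => Q (Fin.append x w) := by
  refine le_antisymm (le_inf' _ _ fun x _ => le_inf' _ _ fun w _ => inf'_le _ (mem_univ _))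
    (le_inf' _ _ fun y _ => ?_)
  rw [← Fin.append_castAdd_natAdd (f := y)]
  exact inf'_le_of_le _ (mem_univ _) (inf'_le _ (mem_univ _))

theorem exists_value_append_inf' (f : (Fin n → Fin 2) → ℝ) :
    ∃ (m : ℕ) (c : ℝ) (u : Fin (n + m) → ℝ) (e : Fin (n + m) → Fin (n + m) → ℝ),
      ∀ x : Fin n → Fin 2, f x = univ.inf' univ_nonempty fun w : Fin m → Fin 2 =>
        value c u e fun j => (((Fin.append x w j).val : ℕ) : ℝ) := by
  set A := ∑ v, |f v|
  have hA : ∀ v, |f v| ≤ A := fun v => single_le_sum (fun v _ => abs_nonneg (f v)) (mem_univ v)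
  let v : Fin (2 ^ n) ≃ (Fin n → Fin 2) := finFunctionFinEquiv.symm
  let u : Fin (n + 2 ^ n) → ℝ :=
    Fin.append 0 fun z => f (v z) - A + 2 * A * ∑ i, ((v z i : ℕ) : ℝ)
  let e := crossCoeff fun i z => 2 * A * (1 - 2 * ((v z i : ℕ) : ℝ))
  refine ⟨2 ^ n, A, u, e, fun x => ?_⟩
  have hvalue : ∀ w : Fin (2 ^ n) → Fin 2,
      (value A u e fun j => (((Fin.append x w j).val : ℕ) : ℝ)) =
        A + ∑ z, (f (v z) - A + 2 * A * hammingDist x (v z)) * ((w z : ℕ) : ℝ) := by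
    intro w
    simp only [u, e, value_append_zero_crossCoeff, Fin.append_left, Fin.append_right,
      hammingDist_eq_sum_bits, mul_add, mul_sum, mul_assoc, add_assoc]
  rw [inf'_congr _ rfl fun w _ => hvalue w, inf'_add_sum_mul_bits, sum_eq_single (v.symm x)]
  · simp [(abs_le.1 (hA x)).2]
  · intro z _ hz
    have hdist : (1 : ℝ) ≤ hammingDist x (v z) := by
      exact_mod_cast hammingDist_pos.2 fun h => hz (by simp [h])
    have hA0 : 0 ≤ A := (abs_nonneg _).trans (hA x)
    have := (abs_le.1 (hA (v z))).1
    exact min_eq_right (by nlinarith [mul_le_mul_of_nonneg_left hdist hA0])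
  · simp

end Qubo

theorem pseudo_boolean_to_qubo_general (n : ℕ) (f : (Fin n → Fin 2) → ℝ) :
    ∃ (m : ℕ) (c : ℝ) (u : Fin (n + m) → ℝ) (e : Fin (n + m) → Fin (n + m) → ℝ),
      (∀ x : Fin n → Fin 2,
        f x =
          Finset.univ.inf' Finset.univ_nonempty
            (fun w : Fin m → Fin 2 =>
              c + (∑ j, u j * (((Fin.append x w j).val : ℕ) : ℝ)) +
                ∑ p ∈ Finset.univ.filter (fun p : Fin (n + m) × Fin (n + m) => p.1 < p.2),
                  e p.1 p.2 * (((Fin.append x w p.1).val : ℕ) : ℝ) *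
                    (((Fin.append x w p.2).val : ℕ) : ℝ))) ∧
      Finset.univ.inf' Finset.univ_nonempty f =
        Finset.univ.inf' Finset.univ_nonempty
          (fun y : Fin (n + m) → Fin 2 =>
            c + (∑ j, u j * ((y j : ℕ) : ℝ)) +
              ∑ p ∈ Finset.univ.filter (fun p : Fin (n + m) × Fin (n + m) => p.1 < p.2),
                e p.1 p.2 * ((y p.1 : ℕ) : ℝ) * ((y p.2 : ℕ) : ℝ)) := by
  obtain ⟨m, c, u, e, hf⟩ := Qubo.exists_value_append_inf' f
  refine ⟨m, c, u, e, hf, ?_⟩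
  rw [Qubo.inf'_univ_eq_inf'_inf'_append]
  exact inf'_congr _ rfl fun x _ => hf x

/-- Every pseudo-Boolean function f : {0,1}^n → ℝ can be represented, pointwise and in
    minimum, by a QUBO function in n + m variables, minimised over the m extra variables. -/
theorem pseudo_boolean_to_qubo (n : ℕ) (hn : 1 ≤ n) (f : (Fin n → Fin 2) → ℝ) :
    ∃ (m : ℕ) (c : ℝ) (u : Fin (n + m) → ℝ) (e : Fin (n + m) → Fin (n + m) → ℝ),
      (∀ x : Fin n → Fin 2,
        f x =
          Finset.univ.inf' Finset.univ_nonempty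
            (fun w : Fin m → Fin 2 =>
              c + (∑ j, u j * (((Fin.append x w j).val : ℕ) : ℝ)) +
                ∑ p ∈ Finset.univ.filter (fun p : Fin (n + m) × Fin (n + m) => p.1 < p.2),
                  e p.1 p.2 * (((Fin.append x w p.1).val : ℕ) : ℝ) *
                    (((Fin.append x w p.2).val : ℕ) : ℝ))) ∧
      Finset.univ.inf' Finset.univ_nonempty f =
        Finset.univ.inf' Finset.univ_nonempty
          (fun y : Fin (n + m) → Fin 2 =>
            c + (∑ j, u j * ((y j : ℕ) : ℝ)) +
              ∑ p ∈ Finset.univ.filter (fun p : Fin (n + m) × Fin (n + m) => p.1 < p.2),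
                e p.1 p.2 * ((y p.1 : ℕ) : ℝ) * ((y p.2 : ℕ) : ℝ)) :=
  pseudo_boolean_to_qubo_general n f
end

section
/- Let G be a finite tree (a connected acyclic simple graph), let (s_1,t_1), …, (s_k,t_k) be pairs of distinct vertices of G, let p_i denote the edge set of the unique path from s_i to t_i, let p = p_1 ∪ ⋯ ∪ p_k, and let λ be a real number with λ > |p|. Then the minimum over all x : p → {0,1} of h_G(x) = ∑_{e ∈ p} (1 − x_e) + λ·∑_{i=1}^k ∏_{e ∈ p_i} x_e equals the minimum cardinality of a set E' of edges of G whose deletion disconnects s_i from t_i (makes s_i and t_i mutually unreachable) for every i ∈ {1,…,k}. -/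
/-- QUBO formulation of Minimum Multicut on a tree: let G be a finite tree, (s i, t i)
    (i < k) pairs of distinct vertices, P i the (unique) path from s i to t i, p i its edge
    set and p their union. If λ > |p|, then the minimum over all binary assignments
    x : p → {0,1} of h_G(x) = ∑_{e ∈ p} (1 − x e) + λ·∑_i ∏_{e ∈ p i} x e equals the minimum
    cardinality of an edge set E' of G whose deletion disconnects s i from t i for every i. -/
theorem multicut_qubo {V : Type*} [Fintype V] [DecidableEq V] (G : SimpleGraph V)
    (hT : G.Connected ∧ G.IsAcyclic) (k : ℕ) (s t : Fin k → V)
    (hst : ∀ i, s i ≠ t i) (P : ∀ i, G.Path (s i) (t i))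
    (pF : Fin k → Finset (Sym2 V)) (hpF : ∀ i, pF i = (P i).val.edges.toFinset)
    (p : Finset (Sym2 V)) (hp : p = Finset.univ.biUnion pF)
    (lam : ℝ) (hlam : (p.card : ℝ) < lam) :
    Finset.univ.inf' Finset.univ_nonempty
      (fun x : { e // e ∈ p } → Fin 2 =>
        (∑ e : { e // e ∈ p }, (1 - ((x e : ℕ) : ℝ))) +
          lam * ∑ i : Fin k,
            ∏ e : { e // e ∈ p },
              (if (e : Sym2 V) ∈ pF i then ((x e : ℕ) : ℝ) else 1)) =
    (sInf {c : ℕ | ∃ E' : Finset (Sym2 V), ↑E' ⊆ G.edgeSet ∧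
        (∀ i, ¬ (G.deleteEdges ↑E').Reachable (s i) (t i)) ∧ E'.card = c} : ℕ) := by
  classical
  obtain ⟨hConn, hAcyc⟩ := hT
  set S : Set ℕ := {c : ℕ | ∃ E' : Finset (Sym2 V), ↑E' ⊆ G.edgeSet ∧
      (∀ i, ¬ (G.deleteEdges ↑E').Reachable (s i) (t i)) ∧ E'.card = c} with hS
  -- membership in pF i ↔ membership in the edges of P i
  have hmem : ∀ (i : Fin k) (e : Sym2 V), e ∈ pF i ↔ e ∈ (P i).val.edges := by
    intro i e; rw [hpF i, List.mem_toFinset]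
  -- pF i ⊆ p
  have hpF_sub : ∀ i, pF i ⊆ p := by
    intro i; rw [hp]; exact Finset.subset_biUnion_of_mem pF (Finset.mem_univ i)
  -- p ⊆ edgeSet
  have hp_edge : ↑p ⊆ G.edgeSet := by
    intro e he
    rw [hp] at he
    simp only [Finset.coe_biUnion, Finset.coe_univ, Set.mem_iUnion] at he
    obtain ⟨i, -, hi⟩ := he
    exact (P i).val.edges_subset_edgeSet ((hmem i e).mp hi)
  -- each pF i is nonempty
  have hpF_ne : ∀ i, ∃ e, e ∈ pF i := by
    intro i
    have hne : (P i).val.edges ≠ [] := by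
      intro h
      have : (P i).val.length = 0 := by
        have := (P i).val.length_edges
        rw [h] at this; simpa using this.symm
      exact hst i ((P i).val.eq_of_length_eq_zero this)
    obtain ⟨e, he⟩ := List.exists_mem_of_ne_nil _ hne
    exact ⟨e, (hmem i e).mpr he⟩
  -- deleting an edge of P i disconnects s i from t i
  have key1 : ∀ (E' : Finset (Sym2 V)) (i : Fin k), (∃ e ∈ pF i, e ∈ E') →
      ¬ (G.deleteEdges ↑E').Reachable (s i) (t i) := by
    rintro E' i ⟨e, he, heE⟩ hreach
    obtain ⟨w⟩ := hreach
    have hw : ∀ f ∈ w.edges, f ∈ G.edgeSet := by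
      intro f hf
      have := w.edges_subset_edgeSet hf
      rw [SimpleGraph.edgeSet_deleteEdges] at this
      exact this.1
    have hwE : ∀ f ∈ w.edges, f ∉ (E' : Set (Sym2 V)) := by
      intro f hf
      have := w.edges_subset_edgeSet hf
      rw [SimpleGraph.edgeSet_deleteEdges] at this
      exact this.2
    set w' := w.transfer G hw with hw'
    have huniq : P i = w'.toPath := hAcyc.path_unique (P i) w'.toPath
    have heP : e ∈ (P i).val.edges := (hmem i e).mp he
    rw [huniq] at heP
    have : e ∈ w'.edges := w'.edges_toPath_subset heP
    rw [hw', SimpleGraph.Walk.edges_transfer] at this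
    exact hwE e this (by simpa using heE)
  -- if no edge of P i is deleted, s i and t i remain connected
  have key2 : ∀ (E' : Finset (Sym2 V)) (i : Fin k),
      ¬ (G.deleteEdges ↑E').Reachable (s i) (t i) → ∃ e ∈ pF i, e ∈ E' := by
    intro E' i hdisc
    by_contra h
    push_neg at h
    refine hdisc ⟨(P i).val.transfer (G.deleteEdges ↑E') ?_⟩
    intro f hf
    rw [SimpleGraph.edgeSet_deleteEdges]
    refine ⟨(P i).val.edges_subset_edgeSet hf, ?_⟩
    intro hfE
    exact h f ((hmem i f).mpr hf) (by simpa using hfE)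
  -- p itself is a multicut, so S is nonempty
  have hpS : p.card ∈ S := by
    refine ⟨p, hp_edge, fun i => key1 p i ?_, rfl⟩
    obtain ⟨e, he⟩ := hpF_ne i
    exact ⟨e, he, hpF_sub i he⟩
  have hSne : S.Nonempty := ⟨p.card, hpS⟩
  have hm_le : sInf S ≤ p.card := Nat.sInf_le hpS
  -- helper: value of 1 - cast of Fin 2
  have hfin : ∀ a : Fin 2, (1 - ((a : ℕ) : ℝ)) = if a = 0 then 1 else 0 := by
    intro a; fin_cases a <;> norm_num
  have hfin01 : ∀ a : Fin 2, ((a : ℕ) : ℝ) = 0 ∨ ((a : ℕ) : ℝ) = 1 := by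
    intro a; fin_cases a <;> norm_num
  refine le_antisymm ?_ ?_
  · -- inf' ≤ sInf S : use a minimum multicut
    obtain ⟨E', hE'sub, hE'disc, hE'card⟩ := Nat.sInf_mem hSne
    set x₀ : { e // e ∈ p } → Fin 2 := fun e => if (e : Sym2 V) ∈ E' then 0 else 1 with hx₀
    refine le_trans (Finset.inf'_le _ (Finset.mem_univ x₀)) ?_
    have hprod : ∀ i : Fin k,
        (∏ e : { e // e ∈ p },
          (if (e : Sym2 V) ∈ pF i then ((x₀ e : ℕ) : ℝ) else 1)) = 0 := by
      intro i
      obtain ⟨e, hei, heE⟩ := key2 E' i (hE'disc i)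
      refine Finset.prod_eq_zero (Finset.mem_univ (⟨e, hpF_sub i hei⟩ : { e // e ∈ p })) ?_
      simp [hx₀, hei, heE]
    have hsum : (∑ e : { e // e ∈ p }, (1 - ((x₀ e : ℕ) : ℝ)))
        = ((p.filter (fun e => e ∈ E')).card : ℝ) := by
      rw [← Finset.sum_boole (fun e => e ∈ E') p]
      rw [Finset.sum_subtype p (fun _ => Iff.rfl) (fun e => if e ∈ E' then (1 : ℝ) else 0)]
      refine Finset.sum_congr rfl ?_
      intro e _
      rw [hfin]
      by_cases h : (e : Sym2 V) ∈ E' <;> simp [hx₀, h]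
    simp only [hprod, Finset.sum_const_zero, mul_zero, add_zero, hsum]
    have : (p.filter (fun e => e ∈ E')).card ≤ E'.card :=
      Finset.card_le_card (fun a ha => (Finset.mem_filter.mp ha).2)
    exact_mod_cast this.trans_eq hE'card
  · -- sInf S ≤ inf'
    refine Finset.le_inf' _ _ ?_
    intro x _
    by_cases hall : ∀ i : Fin k,
        (∏ e : { e // e ∈ p },
          (if (e : Sym2 V) ∈ pF i then ((x e : ℕ) : ℝ) else 1)) = 0
    · -- all paths cut: the zero-set is a multicut
      set E' : Finset (Sym2 V) :=
        (Finset.univ.filter (fun e : { e // e ∈ p } => x e = 0)).image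
          Subtype.val with hE'
      have hE'sub : ↑E' ⊆ G.edgeSet := by
        refine Set.Subset.trans ?_ hp_edge
        intro e he
        rw [hE'] at he
        simp only [Finset.coe_image, Set.mem_image, Finset.mem_coe] at he
        obtain ⟨a, -, rfl⟩ := he
        exact a.2
      have hE'disc : ∀ i, ¬ (G.deleteEdges ↑E').Reachable (s i) (t i) := by
        intro i
        refine key1 E' i ?_
        have h0 := hall i
        rw [Finset.prod_eq_zero_iff] at h0
        obtain ⟨a, -, ha0⟩ := h0
        by_cases ha : (a : Sym2 V) ∈ pF i
        · rw [if_pos ha] at ha0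
          have hv : ((x a : ℕ)) = 0 := by exact_mod_cast ha0
          have hx0 : x a = 0 := Fin.ext hv
          refine ⟨(a : Sym2 V), ha, ?_⟩
          rw [hE']
          exact Finset.mem_image_of_mem _ (Finset.mem_filter.mpr ⟨Finset.mem_univ a, hx0⟩)
        · rw [if_neg ha] at ha0
          norm_num at ha0
      have hcardS : E'.card ∈ S := ⟨E', hE'sub, hE'disc, rfl⟩
      have hmle : sInf S ≤ E'.card := Nat.sInf_le hcardS
      have hsum : (∑ e : { e // e ∈ p }, (1 - ((x e : ℕ) : ℝ))) = (E'.card : ℝ) := by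
        have hcard : E'.card
            = (Finset.univ.filter (fun e : { e // e ∈ p } => x e = 0)).card := by
          rw [hE']
          exact Finset.card_image_of_injective _ Subtype.coe_injective
        rw [hcard, ← Finset.sum_boole (fun e : { e // e ∈ p } => x e = 0) Finset.univ]
        refine Finset.sum_congr rfl ?_
        intro e _
        exact hfin (x e)
      simp only [hall, Finset.sum_const_zero, mul_zero, add_zero, hsum]
      exact_mod_cast hmle
    · -- some path uncut: the penalty dominates
      push_neg at hall
      obtain ⟨i0, hi0⟩ := hall
      have hfac_nonneg : ∀ (i : Fin k) (e : { e // e ∈ p }),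
          (0:ℝ) ≤ (if (e : Sym2 V) ∈ pF i then ((x e : ℕ) : ℝ) else 1) := by
        intro i e
        by_cases h : (e : Sym2 V) ∈ pF i <;> simp [h]
      have hprod_nonneg : ∀ i : Fin k, (0:ℝ) ≤ ∏ e : { e // e ∈ p },
          (if (e : Sym2 V) ∈ pF i then ((x e : ℕ) : ℝ) else 1) :=
        fun i => Finset.prod_nonneg (fun e _ => hfac_nonneg i e)
      have hprod1 : (∏ e : { e // e ∈ p },
          (if (e : Sym2 V) ∈ pF i0 then ((x e : ℕ) : ℝ) else 1)) = 1 := by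
        refine Finset.prod_eq_one ?_
        intro e _
        by_cases h : (e : Sym2 V) ∈ pF i0
        · simp only [h, if_true]
          rcases hfin01 (x e) with h0 | h1
          · exfalso
            exact hi0 (Finset.prod_eq_zero (Finset.mem_univ e) (by simp [h, h0]))
          · exact h1
        · simp [h]
      have hsum_ge : (1:ℝ) ≤ ∑ i : Fin k, ∏ e : { e // e ∈ p },
          (if (e : Sym2 V) ∈ pF i then ((x e : ℕ) : ℝ) else 1) := by
        calc (1:ℝ) = _ := hprod1.symm
        _ ≤ _ := Finset.single_le_sum (fun i _ => hprod_nonneg i) (Finset.mem_univ i0)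
      have hsum_nonneg : (0:ℝ) ≤ ∑ e : { e // e ∈ p }, (1 - ((x e : ℕ) : ℝ)) := by
        refine Finset.sum_nonneg ?_
        intro e _
        rcases hfin01 (x e) with h | h <;> rw [h] <;> norm_num
      have hlam_pos : (0:ℝ) < lam := lt_of_le_of_lt (Nat.cast_nonneg _) hlam
      have hcast : ((sInf S : ℕ) : ℝ) ≤ (p.card : ℝ) := by exact_mod_cast hm_le
      nlinarith [hsum_nonneg, hsum_ge, hlam_pos, hlam, hcast]
end
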